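/- Assume g is flat, V^i_j := η^{ik} ∂²h/∂u^k∂u^j = g^{ik}(∂²f/∂u^k∂u^j − Γ^m_{kj} ∂f/∂u^m) on U, and let a, b, p, q, h₀, Q, W, φ, Ū, ḡ, Γ̄ be as in the reciprocal-transformation setup. Then with Δ^{ijk} := η^{is}Γ^{jk}_s, Γ^{jk}_s := −g^{jl}Γ^k_{ls}, Δ̄^{ijk} := η̄^{is}Γ̄^{jk}_s and Γ̄^{jk}_s := −ḡ^{jl}Γ̄^k_{ls}, one has Δ̄^{ijk}(φ(u)) = W^i_s(u) Δ^{sjk}(u) for all u ∈ U and all indices i, j, k. -/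

import Mathlib

open scoped BigOperators
open Matrix

/-- Partial derivative `∂f/∂xⁱ` at `x`. -/
noncomputable def pd {n : ℕ} (f : (Fin n → ℝ) → ℝ) (i : Fin n) (x : Fin n → ℝ) : ℝ :=
  fderiv ℝ f x (Pi.single i 1)

/-- Christoffel symbols `Γ^k_{ij}` of the metric with contravariant components `gU`
(the `g^{ij}`) and covariant components `gL` (the `g_{ij}`):
`Γ^k_{ij} = (1/2) g^{ks}(∂_i g_{sj} + ∂_j g_{si} − ∂_s g_{ij})`. -/
noncomputable def christoffel {n : ℕ}
    (gU gL : (Fin n → ℝ) → Matrix (Fin n) (Fin n) ℝ)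
    (k i j : Fin n) (x : Fin n → ℝ) : ℝ :=
  (1 / 2) * ∑ s, gU x k s *
    (pd (fun y => gL y s j) i x + pd (fun y => gL y s i) j x - pd (fun y => gL y i j) s x)

/-- Curvature tensor `R_{ijk}{}^s = ∂_i Γ^s_{jk} − ∂_j Γ^s_{ik} + Γ^s_{im}Γ^m_{jk} − Γ^s_{jm}Γ^m_{ik}`. -/
noncomputable def curvature {n : ℕ}
    (gU gL : (Fin n → ℝ) → Matrix (Fin n) (Fin n) ℝ)
    (i j k s : Fin n) (x : Fin n → ℝ) : ℝ :=
  pd (christoffel gU gL s j k) i x - pd (christoffel gU gL s i k) j x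
    + ∑ m, christoffel gU gL s i m x * christoffel gU gL m j k x
    - ∑ m, christoffel gU gL s j m x * christoffel gU gL m i k x

/-- Covariant derivative `∇_k V^i_j = ∂_k V^i_j + Γ^i_{km} V^m_j − Γ^m_{kj} V^i_m`
of a (1,1)-tensor `V`. -/
noncomputable def covDer {n : ℕ}
    (gU gL V : (Fin n → ℝ) → Matrix (Fin n) (Fin n) ℝ)
    (k i j : Fin n) (x : Fin n → ℝ) : ℝ :=
  pd (fun y => V y i j) k x + ∑ m, christoffel gU gL i k m x * V x m j
    - ∑ m, christoffel gU gL m k j x * V x i m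

/-- Raised partial derivative `∂^i := η^{is} ∂_{u^s}`. -/
noncomputable def pdUp {n : ℕ} (η : Matrix (Fin n) (Fin n) ℝ)
    (f : (Fin n → ℝ) → ℝ) (i : Fin n) (x : Fin n → ℝ) : ℝ :=
  ∑ s, η i s * pd f s x

section PDTools
variable {n : ℕ} {U : Set (Fin n → ℝ)} {x : Fin n → ℝ}

lemma pd_congr {f g : (Fin n → ℝ) → ℝ} (h : f =ᶠ[nhds x] g) (i : Fin n) :
    pd f i x = pd g i x := by
  unfold pd; rw [h.fderiv_eq]

lemma pd_congrOn {f g : (Fin n → ℝ) → ℝ} (hU : IsOpen U) (hx : x ∈ U)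
    (hfg : ∀ y ∈ U, f y = g y) (i : Fin n) : pd f i x = pd g i x :=
  pd_congr (Filter.eventuallyEq_of_mem (hU.mem_nhds hx) hfg) i

lemma diffAt {f : (Fin n → ℝ) → ℝ} (hU : IsOpen U) (hx : x ∈ U)
    (hf : ContDiffOn ℝ (⊤ : ℕ∞) f U) : DifferentiableAt ℝ f x :=
  (hf.contDiffAt (hU.mem_nhds hx)).differentiableAt (by simp)

lemma contDiffOn_pd {f : (Fin n → ℝ) → ℝ} (hU : IsOpen U)
    (hf : ContDiffOn ℝ (⊤ : ℕ∞) f U) (i : Fin n) : ContDiffOn ℝ (⊤ : ℕ∞) (pd f i) U := by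
  have h1 : ContDiffOn ℝ (⊤ : ℕ∞) (fderiv ℝ f) U := hf.fderiv_of_isOpen hU (by simp)
  exact h1.clm_apply contDiffOn_const

lemma pd_sub {f g : (Fin n → ℝ) → ℝ} (hf : DifferentiableAt ℝ f x)
    (hg : DifferentiableAt ℝ g x) (i : Fin n) :
    pd (fun y => f y - g y) i x = pd f i x - pd g i x := by
  unfold pd; rw [fderiv_fun_sub hf hg]; rfl

lemma pd_mul {f g : (Fin n → ℝ) → ℝ} (hf : DifferentiableAt ℝ f x)
    (hg : DifferentiableAt ℝ g x) (i : Fin n) :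
    pd (fun y => f y * g y) i x = pd f i x * g x + f x * pd g i x := by
  unfold pd; rw [fderiv_fun_mul hf hg]; simp; ring

lemma pd_const_mul {f : (Fin n → ℝ) → ℝ} (hf : DifferentiableAt ℝ f x) (c : ℝ) (i : Fin n) :
    pd (fun y => c * f y) i x = c * pd f i x := by
  unfold pd; rw [fderiv_const_mul hf]; rfl

lemma pd_sum {ι : Type*} (s : Finset ι) {f : ι → (Fin n → ℝ) → ℝ}
    (hf : ∀ m ∈ s, DifferentiableAt ℝ (f m) x) (i : Fin n) :
    pd (fun y => ∑ m ∈ s, f m y) i x = ∑ m ∈ s, pd (f m) i x := by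
  unfold pd; rw [fderiv_fun_sum hf]; simp

lemma pd_comm {f : (Fin n → ℝ) → ℝ} (hU : IsOpen U) (hx : x ∈ U)
    (hf : ContDiffOn ℝ (⊤ : ℕ∞) f U) (i j : Fin n) :
    pd (pd f i) j x = pd (pd f j) i x := by
  have hc : ContDiffAt ℝ (⊤ : ℕ∞) f x := hf.contDiffAt (hU.mem_nhds hx)
  have hsymm := hc.isSymmSndFDerivAt (by rw [minSmoothness_of_isRCLikeNormedField]; exact WithTop.coe_le_coe.mpr le_top)
  have hd : DifferentiableAt ℝ (fderiv ℝ f) x :=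
    (hc.fderiv_right (m := 1) (WithTop.coe_le_coe.mpr le_top)).differentiableAt one_ne_zero
  have key : ∀ a b : Fin n, pd (pd f a) b x
      = fderiv ℝ (fderiv ℝ f) x (Pi.single b 1) (Pi.single a 1) := by
    intro a b
    show fderiv ℝ (fun y => fderiv ℝ f y (Pi.single a 1)) x (Pi.single b 1) = _
    rw [fderiv_clm_apply hd (differentiableAt_const _)]
    simp
  rw [key i j, key j i, hsymm]

lemma clm_eval {L : (Fin n → ℝ) →L[ℝ] ℝ} (v : Fin n → ℝ) :
    L v = ∑ i, v i * L (Pi.single i 1) := by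
  have hv : v = ∑ i, (v i) • (Pi.single i 1 : Fin n → ℝ) := by
    funext j
    simp [Pi.single_apply, Finset.sum_apply]
  calc L v = L (∑ i, (v i) • (Pi.single i 1 : Fin n → ℝ)) := by rw [← hv]
    _ = ∑ i, v i * L (Pi.single i 1) := by rw [map_sum]; simp

lemma pd_comp {F : (Fin n → ℝ) → ℝ} {φ : (Fin n → ℝ) → (Fin n → ℝ)}
    (hF : DifferentiableAt ℝ F (φ x)) (hφ : ∀ i, DifferentiableAt ℝ (fun y => φ y i) x)
    (m : Fin n) :
    pd (fun y => F (φ y)) m x = ∑ i, pd (fun y => φ y i) m x * pd F i (φ x) := by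
  have hφd : DifferentiableAt ℝ φ x := by
    have : φ = fun y => fun i => φ y i := rfl
    rw [this]
    exact differentiableAt_pi.2 hφ
  have hcomp : fderiv ℝ (fun y => F (φ y)) x = (fderiv ℝ F (φ x)).comp (fderiv ℝ φ x) :=
    fderiv_comp x hF hφd
  have hpi : ∀ v, fderiv ℝ φ x v = fun i => fderiv ℝ (fun y => φ y i) x v := by
    intro v
    rw [fderiv_pi hφ]
    rfl
  unfold pd
  rw [hcomp]
  simp only [ContinuousLinearMap.comp_apply]
  rw [clm_eval (fderiv ℝ φ x (Pi.single m 1))]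
  rw [hpi]

lemma pd_const (c : ℝ) (i : Fin n) : pd (fun _ => c) i x = 0 := by
  unfold pd; rw [fderiv_fun_const]; rfl

end PDTools

noncomputable def GamL {n : ℕ} (gL : (Fin n → ℝ) → Matrix (Fin n) (Fin n) ℝ)
    (t l s : Fin n) (x : Fin n → ℝ) : ℝ :=
  (1/2) * (pd (fun y => gL y t s) l x + pd (fun y => gL y t l) s x - pd (fun y => gL y l s) t x)

lemma christoffel_eq {n : ℕ} (g gL : (Fin n → ℝ) → Matrix (Fin n) (Fin n) ℝ)
    (i a b : Fin n) (y : Fin n → ℝ) :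
    christoffel g gL i a b y = ∑ t, g y i t * GamL gL t a b y := by
  unfold christoffel GamL
  rw [Finset.mul_sum]
  exact Finset.sum_congr rfl fun t _ => by ring

noncomputable def Mfun {n : ℕ} (g gL : (Fin n → ℝ) → Matrix (Fin n) (Fin n) ℝ)
    (f : (Fin n → ℝ) → ℝ) (s c : Fin n) : (Fin n → ℝ) → ℝ :=
  fun y => pd (pd f c) s y - ∑ m, christoffel g gL m s c y * pd f m y

variable {n : ℕ}


variable {n : ℕ}

lemma sc23 {f : Fin n → Fin n → Fin n → ℝ} :
    ∑ a, ∑ b, ∑ c, f a b c = ∑ a, ∑ c, ∑ b, f a b c :=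
  Finset.sum_congr rfl fun _ _ => Finset.sum_comm

lemma sc34 {f : Fin n → Fin n → Fin n → Fin n → ℝ} :
    ∑ a, ∑ b, ∑ c, ∑ d, f a b c d = ∑ a, ∑ b, ∑ d, ∑ c, f a b c d :=
  Finset.sum_congr rfl fun _ _ => Finset.sum_congr rfl fun _ _ => Finset.sum_comm

lemma core_alg (eta g W : Matrix (Fin n) (Fin n) ℝ) (G : Fin n → Matrix (Fin n) (Fin n) ℝ)
    (hGE : ∀ t a b, G t a b = G t b a)
    (c1 : ∀ a b, ∑ s, eta a s * W b s = ∑ s, W a s * eta s b)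
    (c3 : ∀ t a b, ∑ m, W m a * G t m b = ∑ m, G t a m * W m b)
    (i j k : Fin n) :
    ∑ s, eta i s * (-∑ l, g j l * ((1/2) * ∑ t, g k t *
      ((∑ m, W m l * (G t m s + G s m t)) + (∑ m, W m s * (G t m l + G l m t))
        - (∑ m, W m t * (G l m s + G s m l)))))
    = ∑ s, W i s * (∑ a, eta s a * (-∑ l, g j l * (∑ t, g k t * G t l a))) := by
  -- E t l s := ∑ m, G t l m * W m s, symmetric in (l,s)
  set E : Fin n → Fin n → Fin n → ℝ := fun t l s => ∑ m, G t l m * W m s with hE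
  have hc3 : ∀ t l s, ∑ m, W m l * G t m s = E t l s := fun t l s => c3 t l s
  have hEsym : ∀ t l s, E t l s = E t s l := by
    intro t l s
    have h1 : E t l s = ∑ m, W m l * G t m s := (c3 t l s).symm
    have h2 : E t s l = ∑ m, W m l * G t m s :=
      Finset.sum_congr rfl fun m _ => by rw [hGE t s m]; ring
    rw [h1, h2]
  -- pointwise bracket simplification
  have hbr : ∀ s l t, (∑ m, W m l * (G t m s + G s m t)) + (∑ m, W m s * (G t m l + G l m t))
        - (∑ m, W m t * (G l m s + G s m l)) = 2 * E t l s := by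
    intro s l t
    have e1 : (∑ m, W m l * (G t m s + G s m t))
        = (∑ m, W m l * G t m s) + (∑ m, W m l * G s m t) := by
      rw [← Finset.sum_add_distrib]; exact Finset.sum_congr rfl fun m _ => by ring
    have e2 : (∑ m, W m s * (G t m l + G l m t))
        = (∑ m, W m s * G t m l) + (∑ m, W m s * G l m t) := by
      rw [← Finset.sum_add_distrib]; exact Finset.sum_congr rfl fun m _ => by ring
    have e3 : (∑ m, W m t * (G l m s + G s m l))
        = (∑ m, W m t * G l m s) + (∑ m, W m t * G s m l) := by
      rw [← Finset.sum_add_distrib]; exact Finset.sum_congr rfl fun m _ => by ring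
    rw [e1, e2, e3, hc3 t l s, hc3 s l t, hc3 t s l, hc3 l s t, hc3 l t s, hc3 s t l]
    rw [hEsym t s l, hEsym l t s, hEsym s l t]
    ring
  -- replace bracket
  have hL : ∑ s, eta i s * (-∑ l, g j l * ((1/2) * ∑ t, g k t *
      ((∑ m, W m l * (G t m s + G s m t)) + (∑ m, W m s * (G t m l + G l m t))
        - (∑ m, W m t * (G l m s + G s m l)))))
      = ∑ s, eta i s * (-∑ l, g j l * ∑ t, g k t * E t l s) := by
    simp only [hbr]
    refine Finset.sum_congr rfl fun s _ => ?_
    congr 1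
    congr 1
    refine Finset.sum_congr rfl fun l _ => ?_
    congr 1
    rw [Finset.mul_sum]
    exact Finset.sum_congr rfl fun t _ => by ring
  rw [hL]
  simp only [hE, Finset.mul_sum, mul_neg, Finset.sum_neg_distrib, mul_assoc, neg_inj]
  conv_lhs => rw [sc34, sc23, Finset.sum_comm, sc23, sc34]
  conv_rhs => rw [Finset.sum_comm, sc23, sc34]
  refine Finset.sum_congr rfl fun m _ => Finset.sum_congr rfl fun l _ =>
    Finset.sum_congr rfl fun t _ => ?_
  have h1 : (∑ s, eta i s * (g j l * (g k t * (G t l m * W m s))))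
      = (∑ s, eta i s * W m s) * (g j l * (g k t * G t l m)) := by
    rw [Finset.sum_mul]; exact Finset.sum_congr rfl fun s _ => by ring
  have h2 : (∑ s, W i s * (eta s m * (g j l * (g k t * G t l m))))
      = (∑ s, W i s * eta s m) * (g j l * (g k t * G t l m)) := by
    rw [Finset.sum_mul]; exact Finset.sum_congr rfl fun s _ => by ring
  rw [h1, h2, c1]


theorem stmt_7
    (n : ℕ) (hn : 1 ≤ n)
    (U : Set (Fin n → ℝ)) (hU_open : IsOpen U) (hU_conn : IsConnected U)
    (hU_sc : SimplyConnectedSpace U)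
    (eta etaL : Matrix (Fin n) (Fin n) ℝ)
    (heta_symm : eta.IsSymm) (heta_inv : eta * etaL = 1)
    (g gL : (Fin n → ℝ) → Matrix (Fin n) (Fin n) ℝ)
    (hg_smooth : ∀ i j, ContDiffOn ℝ (⊤ : ℕ∞) (fun x => g x i j) U)
    (hgL_smooth : ∀ i j, ContDiffOn ℝ (⊤ : ℕ∞) (fun x => gL x i j) U)
    (hg_symm : ∀ x ∈ U, (g x).IsSymm)
    (hg_inv : ∀ x ∈ U, g x * gL x = 1)
    (hg_flat : ∀ x ∈ U, ∀ i j k s, curvature g gL i j k s x = 0)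
    (h f : (Fin n → ℝ) → ℝ) (hh : ContDiffOn ℝ (⊤ : ℕ∞) h U) (hf : ContDiffOn ℝ (⊤ : ℕ∞) f U)
    (V : (Fin n → ℝ) → Matrix (Fin n) (Fin n) ℝ)
    (hVh : ∀ x ∈ U, ∀ i j, V x i j = ∑ k, eta i k * pd (pd h j) k x)
    (hVf : ∀ x ∈ U, ∀ i j, V x i j =
      ∑ k, g x i k * (pd (pd f j) k x - ∑ m, christoffel g gL m k j x * pd f m x))
    (a b p q : ℝ) (habpq : a * q - b * p ≠ 0)
    (Q W : (Fin n → ℝ) → Matrix (Fin n) (Fin n) ℝ)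
    (hQ : ∀ x ∈ U, Q x = q • (1 : Matrix (Fin n) (Fin n) ℝ) - p • V x)
    (hQW : ∀ x ∈ U, Q x * W x = 1 ∧ W x * Q x = 1)
    (phi psi : (Fin n → ℝ) → (Fin n → ℝ))
    (hphi : ∀ x ∈ U, ∀ i, phi x i = q * x i - p * ∑ k, eta i k * pd h k x)
    (hphi_smooth : ∀ i, ContDiffOn ℝ (⊤ : ℕ∞) (fun x => phi x i) U)
    (hphi_inj : Set.InjOn phi U)
    (hUb_open : IsOpen (phi '' U))
    (hpsi : ∀ x ∈ U, psi (phi x) = x)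
    (hpsi_smooth : ∀ i, ContDiffOn ℝ (⊤ : ℕ∞) (fun v => psi v i) (phi '' U))
    (hJac : ∀ x ∈ U, ∀ i j, pd (fun y => phi y i) j x = Q x i j)
    (gb gbL : (Fin n → ℝ) → Matrix (Fin n) (Fin n) ℝ)
    (hgb : ∀ x ∈ U, gb (phi x) = g x)
    (hgbL : ∀ x ∈ U, gbL (phi x) = gL x)
    (hgb_smooth : ∀ i j, ContDiffOn ℝ (⊤ : ℕ∞) (fun v => gb v i j) (phi '' U))
    (hgbL_smooth : ∀ i j, ContDiffOn ℝ (⊤ : ℕ∞) (fun v => gbL v i j) (phi '' U))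
    (Del : (Fin n → ℝ) → Fin n → Fin n → Fin n → ℝ)
    (hDel : ∀ x, ∀ i j k, Del x i j k =
      ∑ s, eta i s * (-∑ l, g x j l * christoffel g gL k l s x))
    (Delb : (Fin n → ℝ) → Fin n → Fin n → Fin n → ℝ)
    (hDelb : ∀ v, ∀ i j k, Delb v i j k =
      ∑ s, eta i s * (-∑ l, gb v j l * christoffel gb gbL k l s v))
    :
    ∀ x ∈ U, ∀ i j k, Delb (phi x) i j k = ∑ s, W x i s * Del x s j k := by
  intro x hx i j k
  -- ### basic symmetric-matrix facts on U
  have hgLg : ∀ y ∈ U, gL y * g y = 1 := fun y hy => mul_eq_one_comm.mp (hg_inv y hy)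
  have hgEy : ∀ y ∈ U, ∀ c d, g y c d = g y d c := by
    intro y hy c d
    conv_lhs => rw [← hg_symm y hy]
    rfl
  have hgLT : ∀ y ∈ U, (gL y)ᵀ = gL y := by
    intro y hy
    have h1 : (gL y)ᵀ * g y = 1 := by
      have h2 := congrArg Matrix.transpose (hg_inv y hy)
      rw [Matrix.transpose_mul, Matrix.transpose_one] at h2
      rwa [hg_symm y hy] at h2
    calc (gL y)ᵀ = (gL y)ᵀ * (g y * gL y) := by rw [hg_inv y hy, Matrix.mul_one]
      _ = ((gL y)ᵀ * g y) * gL y := by rw [Matrix.mul_assoc]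
      _ = gL y := by rw [h1, Matrix.one_mul]
  have hgLEy : ∀ y ∈ U, ∀ c d, gL y c d = gL y d c := by
    intro y hy c d
    conv_lhs => rw [← hgLT y hy]
    rfl
  have pdsymm : ∀ y ∈ U, ∀ c d e, pd (fun z => gL z c d) e y = pd (fun z => gL z d c) e y :=
    fun y hy c d e => pd_congrOn hU_open hy (fun z hz => hgLEy z hz c d) e
  -- ### smoothness and differentiability helpers
  have dAt : ∀ {F : (Fin n → ℝ) → ℝ}, ContDiffOn ℝ (⊤ : ℕ∞) F U → ∀ y ∈ U, DifferentiableAt ℝ F y :=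
    fun {F} hF y hy => diffAt hU_open hy hF
  have sChr : ∀ m c d, ContDiffOn ℝ (⊤ : ℕ∞) (fun y => christoffel g gL m c d y) U := by
    intro m c d
    unfold christoffel
    exact contDiffOn_const.mul (ContDiffOn.sum fun s _ => (hg_smooth m s).mul
      (((contDiffOn_pd hU_open (hgL_smooth s d) c).add
        (contDiffOn_pd hU_open (hgL_smooth s c) d)).sub
        (contDiffOn_pd hU_open (hgL_smooth c d) s)))
  have spdf : ∀ c, ContDiffOn ℝ (⊤ : ℕ∞) (pd f c) U := fun c => contDiffOn_pd hU_open hf c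
  have spdf2 : ∀ c d, ContDiffOn ℝ (⊤ : ℕ∞) (pd (pd f c) d) U :=
    fun c d => contDiffOn_pd hU_open (spdf c) d
  have spdh : ∀ c, ContDiffOn ℝ (⊤ : ℕ∞) (pd h c) U := fun c => contDiffOn_pd hU_open hh c
  have spdh2 : ∀ c d, ContDiffOn ℝ (⊤ : ℕ∞) (pd (pd h c) d) U :=
    fun c d => contDiffOn_pd hU_open (spdh c) d
  have sMf : ∀ s c, ContDiffOn ℝ (⊤ : ℕ∞) (Mfun g gL f s c) U :=
    fun s c => (spdf2 c s).sub (ContDiffOn.sum fun m _ => (sChr m s c).mul (spdf m))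
  -- ### lowered Christoffel symbols
  have hGamE : ∀ y ∈ U, ∀ t c d, GamL gL t c d y = GamL gL t d c y := by
    intro y hy t c d
    unfold GamL
    rw [pdsymm y hy c d t]
    ring
  have hChrLowSym : ∀ y ∈ U, ∀ m c d, christoffel g gL m c d y = christoffel g gL m d c y := by
    intro y hy m c d
    rw [christoffel_eq, christoffel_eq]
    exact Finset.sum_congr rfl fun t _ => by rw [hGamE y hy t c d]
  have hMetric : ∀ c d m, pd (fun z => gL z c d) m x = GamL gL c m d x + GamL gL d m c x := by
    intro c d m
    unfold GamL
    rw [pdsymm x hx d c m, pdsymm x hx m d c, pdsymm x hx m c d]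
    ring
  have hGamLow : ∀ t c d, GamL gL t c d x = ∑ i, gL x t i * christoffel g gL i c d x := by
    intro t c d
    calc GamL gL t c d x = ∑ u, (1 : Matrix (Fin n) (Fin n) ℝ) t u * GamL gL u c d x := by
          simp [Matrix.one_apply]
      _ = ∑ u, ((gL x * g x) t u) * GamL gL u c d x := by rw [hgLg x hx]
      _ = ∑ u, (∑ i, gL x t i * g x i u) * GamL gL u c d x := by
          simp [Matrix.mul_apply]
      _ = ∑ u, ∑ i, gL x t i * g x i u * GamL gL u c d x := by
          exact Finset.sum_congr rfl fun u _ => Finset.sum_mul _ _ _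
      _ = ∑ i, ∑ u, gL x t i * g x i u * GamL gL u c d x := Finset.sum_comm
      _ = ∑ i, gL x t i * christoffel g gL i c d x := by
          refine Finset.sum_congr rfl fun i _ => ?_
          rw [christoffel_eq, Finset.mul_sum]
          exact Finset.sum_congr rfl fun u _ => by ring
  -- ### c1 : the eta-symmetry of W
  have hWQ : W x * Q x = 1 := (hQW x hx).2
  have hQWx : Q x * W x = 1 := (hQW x hx).1
  have hVeta : V x * eta = eta * (V x)ᵀ := by
    have hVxH : V x = eta * (Matrix.of fun c d => pd (pd h d) c x) := by
      ext c d
      rw [Matrix.mul_apply, hVh x hx c d]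
      exact Finset.sum_congr rfl fun m _ => rfl
    have hHsym : (Matrix.of fun c d => pd (pd h d) c x)ᵀ
        = (Matrix.of fun c d => pd (pd h d) c x) := by
      ext c d
      show pd (pd h c) d x = pd (pd h d) c x
      exact pd_comm hU_open hx hh c d
    rw [hVxH, Matrix.transpose_mul, heta_symm.eq, ← Matrix.mul_assoc, hHsym]
  have hQeta : Q x * eta = eta * (Q x)ᵀ := by
    rw [hQ x hx]
    rw [Matrix.sub_mul, Matrix.transpose_sub, Matrix.mul_sub, Matrix.smul_mul,
      Matrix.transpose_smul, Matrix.mul_smul, Matrix.transpose_smul, Matrix.mul_smul,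
      Matrix.smul_mul, Matrix.transpose_one, Matrix.one_mul, Matrix.mul_one, hVeta]
  have hWeta : W x * eta = eta * (W x)ᵀ := by
    calc W x * eta = W x * eta * ((Q x)ᵀ * (W x)ᵀ) := by
          rw [← Matrix.transpose_mul, hWQ, Matrix.transpose_one, Matrix.mul_one]
      _ = W x * (eta * (Q x)ᵀ) * (W x)ᵀ := by rw [Matrix.mul_assoc (W x), Matrix.mul_assoc, Matrix.mul_assoc]
      _ = W x * (Q x * eta) * (W x)ᵀ := by rw [hQeta]
      _ = (W x * Q x) * (eta * (W x)ᵀ) := by rw [← Matrix.mul_assoc (W x) (Q x) eta, Matrix.mul_assoc]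
      _ = eta * (W x)ᵀ := by rw [hWQ, Matrix.one_mul]
  have c1 : ∀ c d, ∑ s, eta c s * W x d s = ∑ s, W x c s * eta s d := by
    intro c d
    have h1 : (eta * (W x)ᵀ) c d = (W x * eta) c d := by rw [hWeta]
    rw [Matrix.mul_apply, Matrix.mul_apply] at h1
    simpa [Matrix.transpose_apply] using h1.symm ▸ h1
  -- ### S1 : symmetry of Γ·V in lower indices (uses flatness)
  have hVMf : ∀ y ∈ U, ∀ c d, V y c d = ∑ s, g y c s * Mfun g gL f s d y :=
    fun y hy c d => hVf y hy c d
  have hMsymU : ∀ y ∈ U, ∀ s c, Mfun g gL f s c y = Mfun g gL f c s y := by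
    intro y hy s c
    show pd (pd f c) s y - ∑ m, christoffel g gL m s c y * pd f m y
        = pd (pd f s) c y - ∑ m, christoffel g gL m c s y * pd f m y
    rw [pd_comm hU_open hy hf c s]
    congr 1
    exact Finset.sum_congr rfl fun m _ => by rw [hChrLowSym y hy m s c]
  -- h-route: ∂V is symmetric
  have pdVh : ∀ c d e, pd (fun y => V y c d) e x
      = ∑ m, eta c m * pd (pd (pd h d) m) e x := by
    intro c d e
    have h1 : pd (fun y => V y c d) e x
        = pd (fun y => ∑ m, eta c m * pd (pd h d) m y) e x :=
      pd_congrOn hU_open hx (fun y hy => hVh y hy c d) e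
    rw [h1, pd_sum Finset.univ (fun m _ =>
      (dAt (spdh2 d m) x hx).const_mul (eta c m)) e]
    exact Finset.sum_congr rfl fun m _ => pd_const_mul (dAt (spdh2 d m) x hx) (eta c m) e
  have h3sym : ∀ d m e, pd (pd (pd h d) m) e x = pd (pd (pd h e) m) d x := by
    intro d m e
    have s1 : pd (pd (pd h d) m) e x = pd (pd (pd h m) d) e x := by
      refine pd_congrOn hU_open hx (fun y hy => ?_) e
      exact pd_comm hU_open hy hh d m
    have s2 : pd (pd (pd h m) d) e x = pd (pd (pd h m) e) d x :=
      pd_comm hU_open hx (spdh m) d e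
    have s3 : pd (pd (pd h m) e) d x = pd (pd (pd h e) m) d x := by
      refine pd_congrOn hU_open hx (fun y hy => ?_) d
      exact pd_comm hU_open hy hh m e
    rw [s1, s2, s3]
  have pdVsym : ∀ c d e, pd (fun y => V y c d) e x = pd (fun y => V y c e) d x := by
    intro c d e
    rw [pdVh c d e, pdVh c e d]
    exact Finset.sum_congr rfl fun m _ => by rw [h3sym d m e]
  -- derivative of the inverse metric
  have hginvConst : ∀ c d e, ∑ m, (pd (fun y => g y c m) e x * gL x m d
      + g x c m * pd (fun y => gL y m d) e x) = 0 := by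
    intro c d e
    have h0 : pd (fun y => ∑ m, g y c m * gL y m d) e x = 0 := by
      have h1 : pd (fun y => ∑ m, g y c m * gL y m d) e x
          = pd (fun _ => (1 : Matrix (Fin n) (Fin n) ℝ) c d) e x := by
        refine pd_congrOn hU_open hx (fun y hy => ?_) e
        rw [← Matrix.mul_apply, hg_inv y hy]
      rw [h1, pd_const]
    rw [← h0, pd_sum Finset.univ (fun m _ =>
      (dAt (hg_smooth c m) x hx).fun_mul (dAt (hgL_smooth m d) x hx)) e]
    exact Finset.sum_congr rfl fun m _ =>
      (pd_mul (dAt (hg_smooth c m) x hx) (dAt (hgL_smooth m d) x hx) e).symm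
  have hdg : ∀ c d e, pd (fun y => g y c d) e x
      = -∑ u, (∑ m, g x c m * pd (fun y => gL y m u) e x) * g x u d := by
    intro c d e
    have e1 : ∀ u, ∑ m, pd (fun y => g y c m) e x * gL x m u
        = -∑ m, g x c m * pd (fun y => gL y m u) e x := by
      intro u
      have h2 := hginvConst c u e
      rw [Finset.sum_add_distrib] at h2
      linarith
    calc pd (fun y => g y c d) e x
        = ∑ m, pd (fun y => g y c m) e x * (1 : Matrix (Fin n) (Fin n) ℝ) m d := by
          simp [Matrix.one_apply]
      _ = ∑ m, pd (fun y => g y c m) e x * ((gL x * g x) m d) := by rw [hgLg x hx]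
      _ = ∑ m, pd (fun y => g y c m) e x * (∑ u, gL x m u * g x u d) := by
          simp [Matrix.mul_apply]
      _ = ∑ m, ∑ u, pd (fun y => g y c m) e x * gL x m u * g x u d := by
          refine Finset.sum_congr rfl fun m _ => ?_
          rw [Finset.mul_sum]
          exact Finset.sum_congr rfl fun u _ => by ring
      _ = ∑ u, ∑ m, pd (fun y => g y c m) e x * gL x m u * g x u d := Finset.sum_comm
      _ = ∑ u, (∑ m, pd (fun y => g y c m) e x * gL x m u) * g x u d := by
          refine Finset.sum_congr rfl fun u _ => ?_
          rw [Finset.sum_mul]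
      _ = ∑ u, (-∑ m, g x c m * pd (fun y => gL y m u) e x) * g x u d := by
          refine Finset.sum_congr rfl fun u _ => ?_
          rw [e1 u]
      _ = -∑ u, (∑ m, g x c m * pd (fun y => gL y m u) e x) * g x u d := by
          rw [← Finset.sum_neg_distrib]
          exact Finset.sum_congr rfl fun u _ => by ring
  have hdgFin : ∀ c d e, pd (fun y => g y c d) e x
      = -(∑ u, g x d u * christoffel g gL c e u x) - ∑ m, g x c m * christoffel g gL d e m x := by
    intro c d e
    rw [hdg c d e]
    have e2 : ∀ u, (∑ m, g x c m * pd (fun y => gL y m u) e x)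
        = christoffel g gL c e u x + ∑ m, g x c m * GamL gL u e m x := by
      intro u
      rw [christoffel_eq, ← Finset.sum_add_distrib]
      refine Finset.sum_congr rfl fun m _ => ?_
      rw [hMetric m u e]
      ring
    calc -∑ u, (∑ m, g x c m * pd (fun y => gL y m u) e x) * g x u d
        = -∑ u, (christoffel g gL c e u x * g x u d
            + (∑ m, g x c m * GamL gL u e m x) * g x u d) := by
          congr 1
          refine Finset.sum_congr rfl fun u _ => ?_
          rw [e2 u]
          ring
      _ = -(∑ u, christoffel g gL c e u x * g x u d)
            - ∑ u, (∑ m, g x c m * GamL gL u e m x) * g x u d := by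
          rw [Finset.sum_add_distrib]
          ring
      _ = -(∑ u, g x d u * christoffel g gL c e u x)
            - ∑ m, g x c m * christoffel g gL d e m x := by
          congr 1
          · congr 1
            refine Finset.sum_congr rfl fun u _ => ?_
            rw [hgEy x hx u d]
            ring
          · calc ∑ u, (∑ m, g x c m * GamL gL u e m x) * g x u d
                = ∑ u, ∑ m, g x c m * GamL gL u e m x * g x u d :=
                  Finset.sum_congr rfl fun u _ => Finset.sum_mul _ _ _
              _ = ∑ m, ∑ u, g x c m * GamL gL u e m x * g x u d := Finset.sum_comm
              _ = ∑ m, g x c m * christoffel g gL d e m x := by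
                  refine Finset.sum_congr rfl fun m _ => ?_
                  rw [christoffel_eq, Finset.mul_sum]
                  refine Finset.sum_congr rfl fun u _ => ?_
                  rw [hgEy x hx u d]
                  ring
  have hCD : ∀ c d e,
      pd (fun y => V y c e) d x + ∑ m, christoffel g gL c d m x * V x m e
        - ∑ m, christoffel g gL m d e x * V x c m
      = ∑ s, g x c s * (pd (Mfun g gL f s e) d x
          - ∑ m, christoffel g gL m d s x * Mfun g gL f m e x
          - ∑ m, christoffel g gL m d e x * Mfun g gL f s m x) := by
    intro c d e
    have pdVf : pd (fun y => V y c e) d x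
        = ∑ s, (pd (fun y => g y c s) d x * Mfun g gL f s e x
            + g x c s * pd (Mfun g gL f s e) d x) := by
      have h1 : pd (fun y => V y c e) d x
          = pd (fun y => ∑ s, g y c s * Mfun g gL f s e y) d x :=
        pd_congrOn hU_open hx (fun y hy => hVMf y hy c e) d
      rw [h1, pd_sum Finset.univ (fun s _ =>
        (dAt (hg_smooth c s) x hx).fun_mul (dAt (sMf s e) x hx)) d]
      exact Finset.sum_congr rfl fun s _ =>
        pd_mul (dAt (hg_smooth c s) x hx) (dAt (sMf s e) x hx) d
    have hB : ∑ m, christoffel g gL c d m x * V x m e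
        = ∑ s, (∑ u, g x s u * christoffel g gL c d u x) * Mfun g gL f s e x := by
      calc ∑ m, christoffel g gL c d m x * V x m e
          = ∑ m, ∑ s, christoffel g gL c d m x * (g x m s * Mfun g gL f s e x) := by
            refine Finset.sum_congr rfl fun m _ => ?_
            rw [hVMf x hx m e, Finset.mul_sum]
        _ = ∑ s, ∑ m, christoffel g gL c d m x * (g x m s * Mfun g gL f s e x) :=
            Finset.sum_comm
        _ = ∑ s, (∑ u, g x s u * christoffel g gL c d u x) * Mfun g gL f s e x := by
            refine Finset.sum_congr rfl fun s _ => ?_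
            rw [Finset.sum_mul]
            refine Finset.sum_congr rfl fun u _ => ?_
            rw [hgEy x hx s u]
            ring
    have hC : ∑ m, christoffel g gL m d e x * V x c m
        = ∑ s, g x c s * ∑ m, christoffel g gL m d e x * Mfun g gL f s m x := by
      calc ∑ m, christoffel g gL m d e x * V x c m
          = ∑ m, ∑ s, christoffel g gL m d e x * (g x c s * Mfun g gL f s m x) := by
            refine Finset.sum_congr rfl fun m _ => ?_
            rw [hVMf x hx c m, Finset.mul_sum]
        _ = ∑ s, ∑ m, christoffel g gL m d e x * (g x c s * Mfun g gL f s m x) :=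
            Finset.sum_comm
        _ = ∑ s, g x c s * ∑ m, christoffel g gL m d e x * Mfun g gL f s m x := by
            refine Finset.sum_congr rfl fun s _ => ?_
            rw [Finset.mul_sum]
            exact Finset.sum_congr rfl fun m _ => by ring
    have hA1 : ∑ s, pd (fun y => g y c s) d x * Mfun g gL f s e x
        = -∑ s, (∑ u, g x s u * christoffel g gL c d u x) * Mfun g gL f s e x
          - ∑ s, g x c s * ∑ m, christoffel g gL m d s x * Mfun g gL f m e x := by
      calc ∑ s, pd (fun y => g y c s) d x * Mfun g gL f s e x
          = ∑ s, ((-(∑ u, g x s u * christoffel g gL c d u x)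
              - ∑ m, g x c m * christoffel g gL s d m x) * Mfun g gL f s e x) := by
            refine Finset.sum_congr rfl fun s _ => ?_
            rw [hdgFin c s d]
        _ = ∑ s, (-((∑ u, g x s u * christoffel g gL c d u x) * Mfun g gL f s e x)
              - (∑ m, g x c m * christoffel g gL s d m x) * Mfun g gL f s e x) :=
            Finset.sum_congr rfl fun s _ => by ring
        _ = -∑ s, (∑ u, g x s u * christoffel g gL c d u x) * Mfun g gL f s e x
              - ∑ s, (∑ m, g x c m * christoffel g gL s d m x) * Mfun g gL f s e x := by
            rw [Finset.sum_sub_distrib, Finset.sum_neg_distrib]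
        _ = -∑ s, (∑ u, g x s u * christoffel g gL c d u x) * Mfun g gL f s e x
              - ∑ s, g x c s * ∑ m, christoffel g gL m d s x * Mfun g gL f m e x := by
            congr 1
            calc ∑ s, (∑ m, g x c m * christoffel g gL s d m x) * Mfun g gL f s e x
                = ∑ s, ∑ m, g x c m * christoffel g gL s d m x * Mfun g gL f s e x := by
                  refine Finset.sum_congr rfl fun s _ => ?_
                  rw [Finset.sum_mul]
              _ = ∑ m, ∑ s, g x c m * christoffel g gL s d m x * Mfun g gL f s e x :=
                  Finset.sum_comm
              _ = ∑ s, g x c s * ∑ m, christoffel g gL m d s x * Mfun g gL f m e x := by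
                  refine Finset.sum_congr rfl fun m _ => ?_
                  rw [Finset.mul_sum]
                  exact Finset.sum_congr rfl fun s _ => by ring
    have hRHS : ∑ s, g x c s * (pd (Mfun g gL f s e) d x
          - ∑ m, christoffel g gL m d s x * Mfun g gL f m e x
          - ∑ m, christoffel g gL m d e x * Mfun g gL f s m x)
        = ∑ s, g x c s * pd (Mfun g gL f s e) d x
          - ∑ s, g x c s * ∑ m, christoffel g gL m d s x * Mfun g gL f m e x
          - ∑ s, g x c s * ∑ m, christoffel g gL m d e x * Mfun g gL f s m x := by
      rw [← Finset.sum_sub_distrib, ← Finset.sum_sub_distrib]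
      exact Finset.sum_congr rfl fun s _ => by ring
    rw [pdVf, Finset.sum_add_distrib, hA1, hB, hC, hRHS]
    ring
  have hN12 : ∀ c d e, pd (Mfun g gL f d e) c x
          - ∑ m, christoffel g gL m c d x * Mfun g gL f m e x
          - ∑ m, christoffel g gL m c e x * Mfun g gL f d m x
      = pd (Mfun g gL f c e) d x
          - ∑ m, christoffel g gL m d c x * Mfun g gL f m e x
          - ∑ m, christoffel g gL m d e x * Mfun g gL f c m x := by
    intro c d e
    have hexp : ∀ s' e' k', pd (Mfun g gL f s' e') k' x
        = pd (pd (pd f e') s') k' x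
          - ∑ m, (pd (fun y => christoffel g gL m s' e' y) k' x * pd f m x
              + christoffel g gL m s' e' x * pd (pd f m) k' x) := by
      intro s' e' k'
      have h1 : pd (Mfun g gL f s' e') k' x
          = pd (fun y => pd (pd f e') s' y
              - ∑ m, christoffel g gL m s' e' y * pd f m y) k' x := rfl
      rw [h1, pd_sub (dAt (spdf2 e' s') x hx)
        (DifferentiableAt.fun_sum fun m _ =>
          (dAt (sChr m s' e') x hx).fun_mul (dAt (spdf m) x hx)) k']
      congr 1
      rw [pd_sum Finset.univ (fun m _ =>
        (dAt (sChr m s' e') x hx).fun_mul (dAt (spdf m) x hx)) k']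
      exact Finset.sum_congr rfl fun m _ =>
        pd_mul (dAt (sChr m s' e') x hx) (dAt (spdf m) x hx) k'
    have hGM1 : ∀ k' s', ∑ m, christoffel g gL m k' s' x * Mfun g gL f m e x
        = ∑ m, christoffel g gL m k' s' x * pd (pd f e) m x
          - ∑ m, ∑ l, christoffel g gL m k' s' x * (christoffel g gL l m e x * pd f l x) := by
      intro k' s'
      rw [← Finset.sum_sub_distrib]
      refine Finset.sum_congr rfl fun m _ => ?_
      show christoffel g gL m k' s' x * (pd (pd f e) m x
          - ∑ l, christoffel g gL l m e x * pd f l x) = _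
      rw [mul_sub, Finset.mul_sum]
    have hGM2 : ∀ k' s', ∑ m, christoffel g gL m k' e x * Mfun g gL f s' m x
        = ∑ m, christoffel g gL m k' e x * pd (pd f m) s' x
          - ∑ m, ∑ l, christoffel g gL m k' e x * (christoffel g gL l s' m x * pd f l x) := by
      intro k' s'
      rw [← Finset.sum_sub_distrib]
      refine Finset.sum_congr rfl fun m _ => ?_
      show christoffel g gL m k' e x * (pd (pd f m) s' x
          - ∑ l, christoffel g gL l s' m x * pd f l x) = _
      rw [mul_sub, Finset.mul_sum]
    have h3f : pd (pd (pd f e) d) c x = pd (pd (pd f e) c) d x :=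
      pd_comm hU_open hx (spdf e) d c
    have hU1 : ∑ m, christoffel g gL m d c x * pd (pd f e) m x
        = ∑ m, christoffel g gL m c d x * pd (pd f e) m x :=
      Finset.sum_congr rfl fun m _ => by rw [hChrLowSym x hx m d c]
    have hU2 : ∑ m, ∑ l, christoffel g gL m d c x * (christoffel g gL l m e x * pd f l x)
        = ∑ m, ∑ l, christoffel g gL m c d x * (christoffel g gL l m e x * pd f l x) :=
      Finset.sum_congr rfl fun m _ => Finset.sum_congr rfl fun l _ => by
        rw [hChrLowSym x hx m d c]
    have hflat : ∀ l, pd (fun y => christoffel g gL l d e y) c x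
          - pd (fun y => christoffel g gL l c e y) d x
        = ∑ m, christoffel g gL l d m x * christoffel g gL m c e x
          - ∑ m, christoffel g gL l c m x * christoffel g gL m d e x := by
      intro l
      have h0 := hg_flat x hx c d e l
      unfold curvature at h0
      linarith
    have key : (∑ m, pd (fun y => christoffel g gL m d e y) c x * pd f m x)
          - (∑ m, pd (fun y => christoffel g gL m c e y) d x * pd f m x)
        = (∑ m, ∑ l, christoffel g gL m c e x * (christoffel g gL l d m x * pd f l x))
          - (∑ m, ∑ l, christoffel g gL m d e x * (christoffel g gL l c m x * pd f l x)) := by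
      calc (∑ m, pd (fun y => christoffel g gL m d e y) c x * pd f m x)
            - (∑ m, pd (fun y => christoffel g gL m c e y) d x * pd f m x)
          = ∑ l, (pd (fun y => christoffel g gL l d e y) c x
              - pd (fun y => christoffel g gL l c e y) d x) * pd f l x := by
            rw [← Finset.sum_sub_distrib]
            exact Finset.sum_congr rfl fun l _ => by ring
        _ = ∑ l, ((∑ m, christoffel g gL l d m x * christoffel g gL m c e x) * pd f l x
              - (∑ m, christoffel g gL l c m x * christoffel g gL m d e x) * pd f l x) := by
            refine Finset.sum_congr rfl fun l _ => ?_
            rw [hflat l]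
            ring
        _ = (∑ l, (∑ m, christoffel g gL l d m x * christoffel g gL m c e x) * pd f l x)
              - ∑ l, (∑ m, christoffel g gL l c m x * christoffel g gL m d e x) * pd f l x :=
            Finset.sum_sub_distrib _ _
        _ = (∑ m, ∑ l, christoffel g gL m c e x * (christoffel g gL l d m x * pd f l x))
            - (∑ m, ∑ l, christoffel g gL m d e x * (christoffel g gL l c m x * pd f l x)) := by
            congr 1
            · calc ∑ l, (∑ m, christoffel g gL l d m x * christoffel g gL m c e x) * pd f l x
                  = ∑ l, ∑ m, christoffel g gL l d m x * christoffel g gL m c e x * pd f l x := by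
                    refine Finset.sum_congr rfl fun l _ => ?_
                    rw [Finset.sum_mul]
                _ = ∑ m, ∑ l, christoffel g gL l d m x * christoffel g gL m c e x * pd f l x :=
                    Finset.sum_comm
                _ = ∑ m, ∑ l, christoffel g gL m c e x * (christoffel g gL l d m x * pd f l x) :=
                    Finset.sum_congr rfl fun m _ => Finset.sum_congr rfl fun l _ => by ring
            · calc ∑ l, (∑ m, christoffel g gL l c m x * christoffel g gL m d e x) * pd f l x
                  = ∑ l, ∑ m, christoffel g gL l c m x * christoffel g gL m d e x * pd f l x := by
                    refine Finset.sum_congr rfl fun l _ => ?_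
                    rw [Finset.sum_mul]
                _ = ∑ m, ∑ l, christoffel g gL l c m x * christoffel g gL m d e x * pd f l x :=
                    Finset.sum_comm
                _ = ∑ m, ∑ l, christoffel g gL m d e x * (christoffel g gL l c m x * pd f l x) :=
                    Finset.sum_congr rfl fun m _ => Finset.sum_congr rfl fun l _ => by ring
    rw [hexp d e c, hexp c e d, hGM1 c d, hGM1 d c, hGM2 c d, hGM2 d c, h3f, hU1, hU2]
    rw [Finset.sum_add_distrib, Finset.sum_add_distrib]
    linarith [key]
  have hN23 : ∀ c d e, pd (Mfun g gL f d e) c x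
          - ∑ m, christoffel g gL m c d x * Mfun g gL f m e x
          - ∑ m, christoffel g gL m c e x * Mfun g gL f d m x
      = pd (Mfun g gL f e d) c x
          - ∑ m, christoffel g gL m c e x * Mfun g gL f m d x
          - ∑ m, christoffel g gL m c d x * Mfun g gL f e m x := by
    intro c d e
    have h1 : pd (Mfun g gL f d e) c x = pd (Mfun g gL f e d) c x :=
      pd_congrOn hU_open hx (fun y hy => hMsymU y hy d e) c
    have h2 : ∑ m, christoffel g gL m c d x * Mfun g gL f m e x
        = ∑ m, christoffel g gL m c d x * Mfun g gL f e m x :=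
      Finset.sum_congr rfl fun m _ => by rw [hMsymU x hx m e]
    have h3 : ∑ m, christoffel g gL m c e x * Mfun g gL f d m x
        = ∑ m, christoffel g gL m c e x * Mfun g gL f m d x :=
      Finset.sum_congr rfl fun m _ => by rw [hMsymU x hx d m]
    rw [h1, h2, h3]
    ring
  have hN13 : ∀ c d e, pd (Mfun g gL f d e) c x
          - ∑ m, christoffel g gL m c d x * Mfun g gL f m e x
          - ∑ m, christoffel g gL m c e x * Mfun g gL f d m x
      = pd (Mfun g gL f d c) e x
          - ∑ m, christoffel g gL m e d x * Mfun g gL f m c x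
          - ∑ m, christoffel g gL m e c x * Mfun g gL f d m x := by
    intro c d e
    rw [hN23 c d e, hN12 c e d, hN23 e c d]
  have hS1 : ∀ c d e, ∑ m, christoffel g gL c d m x * V x m e
      = ∑ m, christoffel g gL c e m x * V x m d := by
    intro c d e
    have h1 := hCD c d e
    have h2 := hCD c e d
    have h3 : ∑ s, g x c s * (pd (Mfun g gL f s e) d x
          - ∑ m, christoffel g gL m d s x * Mfun g gL f m e x
          - ∑ m, christoffel g gL m d e x * Mfun g gL f s m x)
        = ∑ s, g x c s * (pd (Mfun g gL f s d) e x
          - ∑ m, christoffel g gL m e s x * Mfun g gL f m d x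
          - ∑ m, christoffel g gL m e d x * Mfun g gL f s m x) := by
      refine Finset.sum_congr rfl fun s _ => ?_
      rw [hN13 d s e]
    have h4 : pd (fun y => V y c e) d x = pd (fun y => V y c d) e x := pdVsym c e d
    have h5 : ∑ m, christoffel g gL m d e x * V x c m
        = ∑ m, christoffel g gL m e d x * V x c m :=
      Finset.sum_congr rfl fun m _ => by rw [hChrLowSym x hx m d e]
    linarith [h1, h2, h3, h4, h5]
  -- ### c3
  have hGtV : ∀ t c d, ∑ m, GamL gL t c m x * V x m d = ∑ m, GamL gL t d m x * V x m c := by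
    intro t c d
    have e : ∀ cc dd, ∑ m, GamL gL t cc m x * V x m dd
        = ∑ i, gL x t i * ∑ m, christoffel g gL i cc m x * V x m dd := by
      intro cc dd
      calc ∑ m, GamL gL t cc m x * V x m dd
          = ∑ m, ∑ i, gL x t i * christoffel g gL i cc m x * V x m dd := by
            refine Finset.sum_congr rfl fun m _ => ?_
            rw [hGamLow t cc m, Finset.sum_mul]
        _ = ∑ i, ∑ m, gL x t i * christoffel g gL i cc m x * V x m dd := Finset.sum_comm
        _ = ∑ i, gL x t i * ∑ m, christoffel g gL i cc m x * V x m dd := by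
            refine Finset.sum_congr rfl fun i _ => ?_
            rw [Finset.mul_sum]
            exact Finset.sum_congr rfl fun m _ => by ring
    rw [e c d, e d c]
    exact Finset.sum_congr rfl fun i _ => by rw [hS1 i c d]
  have hGMsym : ∀ t, (Matrix.of fun c d => GamL gL t c d x)ᵀ
      = (Matrix.of fun c d => GamL gL t c d x) := by
    intro t
    ext c d
    show GamL gL t d c x = GamL gL t c d x
    exact (hGamE x hx t c d).symm
  have hGV : ∀ t, (Matrix.of fun c d => GamL gL t c d x) * V x
      = (V x)ᵀ * (Matrix.of fun c d => GamL gL t c d x) := by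
    intro t
    ext c d
    rw [Matrix.mul_apply, Matrix.mul_apply]
    show ∑ m, GamL gL t c m x * V x m d = ∑ m, (V x)ᵀ c m * GamL gL t m d x
    rw [hGtV t c d]
    refine Finset.sum_congr rfl fun m _ => ?_
    rw [Matrix.transpose_apply, hGamE x hx t d m]
    ring
  have hGQ : ∀ t, (Matrix.of fun c d => GamL gL t c d x) * Q x
      = (Q x)ᵀ * (Matrix.of fun c d => GamL gL t c d x) := by
    intro t
    rw [hQ x hx, Matrix.mul_sub, Matrix.transpose_sub, Matrix.sub_mul,
      Matrix.mul_smul, Matrix.transpose_smul, Matrix.smul_mul,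
      Matrix.transpose_one, Matrix.mul_one, Matrix.one_mul,
      Matrix.mul_smul, Matrix.transpose_smul, Matrix.smul_mul, hGV]
  have hGW : ∀ t, (Matrix.of fun c d => GamL gL t c d x) * W x
      = (W x)ᵀ * (Matrix.of fun c d => GamL gL t c d x) := by
    intro t
    have h1 : (W x)ᵀ * (Q x)ᵀ = 1 := by
      rw [← Matrix.transpose_mul, hQWx, Matrix.transpose_one]
    calc (Matrix.of fun c d => GamL gL t c d x) * W x
        = ((W x)ᵀ * (Q x)ᵀ) * ((Matrix.of fun c d => GamL gL t c d x) * W x) := by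
          rw [h1, Matrix.one_mul]
      _ = (W x)ᵀ * ((Q x)ᵀ * (Matrix.of fun c d => GamL gL t c d x)) * W x := by
          rw [Matrix.mul_assoc ((W x)ᵀ), ← Matrix.mul_assoc ((Q x)ᵀ), Matrix.mul_assoc ((W x)ᵀ)]
      _ = (W x)ᵀ * ((Matrix.of fun c d => GamL gL t c d x) * Q x) * W x := by rw [hGQ]
      _ = (W x)ᵀ * (Matrix.of fun c d => GamL gL t c d x) * (Q x * W x) := by
          rw [← Matrix.mul_assoc, Matrix.mul_assoc]
      _ = (W x)ᵀ * (Matrix.of fun c d => GamL gL t c d x) := by rw [hQWx, Matrix.mul_one]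
  have c3 : ∀ t c d, ∑ m, W x m c * GamL gL t m d x = ∑ m, GamL gL t c m x * W x m d := by
    intro t c d
    have h1 := congrFun (congrFun (hGW t) c) d
    simp only [Matrix.mul_apply, Matrix.transpose_apply, Matrix.of_apply] at h1
    exact h1.symm
  -- ### chain rule
  have hchain : ∀ c d e, pd (fun v => gbL v c d) e (phi x)
      = ∑ m, W x m e * pd (fun z => gL z c d) m x := by
    intro c d e
    have dF : DifferentiableAt ℝ (fun v => gbL v c d) (phi x) :=
      diffAt hUb_open (Set.mem_image_of_mem phi hx) (hgbL_smooth c d)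
    have dphi : ∀ i, DifferentiableAt ℝ (fun y => phi y i) x :=
      fun i => diffAt hU_open hx (hphi_smooth i)
    have hgLcomp : ∀ m, pd (fun z => gL z c d) m x
        = ∑ i, Q x i m * pd (fun v => gbL v c d) i (phi x) := by
      intro m
      have h1 : pd (fun z => gL z c d) m x = pd (fun z => gbL (phi z) c d) m x :=
        pd_congrOn hU_open hx (fun z hz => by rw [hgbL z hz]) m
      rw [h1, pd_comp dF dphi m]
      exact Finset.sum_congr rfl fun i _ => by rw [hJac x hx i m]
    symm
    calc ∑ m, W x m e * pd (fun z => gL z c d) m x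
        = ∑ m, ∑ i, W x m e * (Q x i m * pd (fun v => gbL v c d) i (phi x)) := by
          refine Finset.sum_congr rfl fun m _ => ?_
          rw [hgLcomp m, Finset.mul_sum]
      _ = ∑ i, ∑ m, W x m e * (Q x i m * pd (fun v => gbL v c d) i (phi x)) := Finset.sum_comm
      _ = ∑ i, (∑ m, Q x i m * W x m e) * pd (fun v => gbL v c d) i (phi x) := by
          refine Finset.sum_congr rfl fun i _ => ?_
          rw [Finset.sum_mul]
          exact Finset.sum_congr rfl fun m _ => by ring
      _ = ∑ i, (1 : Matrix (Fin n) (Fin n) ℝ) i e * pd (fun v => gbL v c d) i (phi x) := by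
          refine Finset.sum_congr rfl fun i _ => ?_
          rw [← Matrix.mul_apply, hQWx]
      _ = pd (fun v => gbL v c d) e (phi x) := by simp [Matrix.one_apply]
  -- ### final assembly
  have hcbar : ∀ l s, christoffel gb gbL k l s (phi x)
      = (1/2) * ∑ t, g x k t *
        ((∑ m, W x m l * (GamL gL t m s x + GamL gL s m t x))
          + (∑ m, W x m s * (GamL gL t m l x + GamL gL l m t x))
          - (∑ m, W x m t * (GamL gL l m s x + GamL gL s m l x))) := by
    intro l s
    show (1 / 2) * ∑ t, gb (phi x) k t *
        (pd (fun y => gbL y t s) l (phi x) + pd (fun y => gbL y t l) s (phi x)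
          - pd (fun y => gbL y l s) t (phi x)) = _
    congr 1
    refine Finset.sum_congr rfl fun t _ => ?_
    rw [hgb x hx, hchain t s l, hchain t l s, hchain l s t]
    simp only [hMetric]
  have hfinL : Delb (phi x) i j k = ∑ s, eta i s * (-∑ l, g x j l * ((1/2) * ∑ t, g x k t *
      ((∑ m, W x m l * (GamL gL t m s x + GamL gL s m t x))
        + (∑ m, W x m s * (GamL gL t m l x + GamL gL l m t x))
        - (∑ m, W x m t * (GamL gL l m s x + GamL gL s m l x))))) := by
    rw [hDelb (phi x) i j k]
    refine Finset.sum_congr rfl fun s _ => ?_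
    congr 1
    congr 1
    refine Finset.sum_congr rfl fun l _ => ?_
    rw [hgb x hx, hcbar l s]
  have hfinR : ∑ s, W x i s * Del x s j k
      = ∑ s, W x i s * (∑ a, eta s a * (-∑ l, g x j l * (∑ t, g x k t * GamL gL t l a x))) := by
    refine Finset.sum_congr rfl fun s _ => ?_
    rw [hDel x s j k]
    congr 1
    refine Finset.sum_congr rfl fun a' _ => ?_
    congr 1
    congr 1
    refine Finset.sum_congr rfl fun l _ => ?_
    rw [christoffel_eq]
  rw [hfinL, hfinR]
  exact core_alg eta (g x) (W x) (fun t => Matrix.of fun c d => GamL gL t c d x)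
    (fun t c d => hGamE x hx t c d) c1 c3 i j k
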